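/- arXiv:2402.13810 — 6 statements merged into one kernel-verified Lean document; each statement's English description precedes it below -/
import Mathlib

section
/- For every n ≥ 1, all n×n real matrices G, Σ, H and every t ≥ 0, one has (1/2)·∫₀ᵗ Tr(H · exp(−2(t−s)·(G·H)) · G·Σ·G) ds = (1/4)·Tr(G·Σ) − (1/4)·Tr(G·Σ · exp(−2t·(G·H))). (This is the closed-form expression for the expected loss of preconditioned Langevin dynamics near a stationary point, Theorem 1.) -/
/-!
With `A = G * H`, `exp (u • A)` commutes with `A`, so cycling the trace turns the integrand into
`trace (G * Sg * (exp (u • A) * A))` at `u = 2 s - 2 t`, the derivative of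
`u ↦ trace (G * Sg * exp (u • A))`. The substitution contributes a second factor `1 / 2`, and the
fundamental theorem of calculus on `[-2 t, 0]` gives the closed form.
-/

open Matrix MeasureTheory NormedSpace

namespace Matrix

variable {n : Type*} [Fintype n] [DecidableEq n]

theorem trace_mul_exp_smul_mul_mul {R : Type*} [CommRing R] [TopologicalSpace R]
    [IsTopologicalRing R] [T2Space R] (G H N : Matrix n n R) (c : R) :
    trace (H * exp (c • (G * H)) * (N * G)) = trace (N * (exp (c • (G * H)) * (G * H))) := by
  have hcomm : Commute (exp (c • (G * H))) (G * H) := ((Commute.refl _).smul_left c).exp_left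
  rw [trace_mul_cycle, hcomm.eq]
  simp only [Matrix.mul_assoc]

section LinftyOp

attribute [local instance] Matrix.linftyOpNormedRing Matrix.linftyOpNormedAlgebra

theorem hasDerivAt_trace_mul_exp_smul (N A : Matrix n n ℝ) (u : ℝ) :
    HasDerivAt (fun u : ℝ ↦ trace (N * exp (u • A))) (trace (N * (exp (u • A) * A))) u :=
  (LinearMap.toContinuousLinearMap ((traceLinearMap n ℝ ℝ).comp
    (LinearMap.mulLeft ℝ N))).hasFDerivAt.comp_hasDerivAt u (hasDerivAt_exp_smul_const A u)

theorem continuous_trace_mul_exp_smul_mul (N A : Matrix n n ℝ) :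
    Continuous fun u : ℝ ↦ trace (N * (exp (u • A) * A)) :=
  (continuous_const.matrix_mul
    ((differentiable_exp_smul_const ℝ A).continuous.matrix_mul continuous_const)).matrix_trace

end LinftyOp

theorem intervalIntegral_trace_mul_exp_smul_mul (N A : Matrix n n ℝ) (a b : ℝ) :
    ∫ u in a..b, trace (N * (exp (u • A) * A)) =
      trace (N * exp (b • A)) - trace (N * exp (a • A)) :=
  intervalIntegral.integral_eq_sub_of_hasDerivAt (fun u _ ↦ hasDerivAt_trace_mul_exp_smul N A u)
    ((continuous_trace_mul_exp_smul_mul N A).intervalIntegrable a b)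

end Matrix

theorem expected_loss_over_time_general (n : ℕ)
    (G Sg H : Matrix (Fin n) (Fin n) ℝ) (t : ℝ) (ht : 0 ≤ t) :
    (1 / 2) * ∫ s in Set.Icc (0 : ℝ) t,
        Matrix.trace (H * NormedSpace.exp ((-(2 * (t - s))) • (G * H)) * (G * Sg * G)) =
      (1 / 4) * Matrix.trace (G * Sg) -
        (1 / 4) * Matrix.trace (G * Sg * NormedSpace.exp ((-(2 * t)) • (G * H))) := by
  set A := G * H
  set f : ℝ → ℝ := fun u ↦ trace (G * Sg * (exp (u • A) * A))
  calc (1 / 2) * ∫ s in Set.Icc (0 : ℝ) t, trace (H * exp ((-(2 * (t - s))) • A) * (G * Sg * G))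
      _ = (1 / 2) * ∫ s in (0 : ℝ)..t, f (2 * s - 2 * t) := by
        rw [integral_Icc_eq_integral_Ioc, ← intervalIntegral.integral_of_le ht]
        simp only [trace_mul_exp_smul_mul_mul, f, A, mul_sub, neg_sub]
      _ = (1 / 4) * ∫ u in -(2 * t)..0, f u := by
        rw [intervalIntegral.integral_comp_mul_sub f two_ne_zero, smul_eq_mul]
        ring_nf
      _ = _ := by
        rw [intervalIntegral_trace_mul_exp_smul_mul, zero_smul, exp_zero, Matrix.mul_one]
        ring

/-- Theorem 1 (Expected loss over time): closed-form expression for the expected loss of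
preconditioned Langevin dynamics near a stationary point. -/
theorem expected_loss_over_time (n : ℕ) (hn : 1 ≤ n)
    (G Sg H : Matrix (Fin n) (Fin n) ℝ) (t : ℝ) (ht : 0 ≤ t) :
    (1 / 2) * ∫ s in Set.Icc (0 : ℝ) t,
        Matrix.trace (H * NormedSpace.exp ((-(2 * (t - s))) • (G * H)) * (G * Sg * G)) =
      (1 / 4) * Matrix.trace (G * Sg) -
        (1 / 4) * Matrix.trace (G * Sg * NormedSpace.exp ((-(2 * t)) • (G * H))) :=
  expected_loss_over_time_general n G Sg H t ht
end

section
/- Let G and H be symmetric positive definite n×n real matrices and let Σ be any n×n real matrix. Then as t → ∞, the function t ↦ (1/4)·Tr(Σ·G·(I − exp(−2t·(G·H)))) converges to (1/4)·Tr(Σ·G). (Corollary: expected loss for PD Hessian.) -/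
/-!
With `S = √G`, the product `G * H = S * (S * H * S) * S⁻¹` is similar to the positive definite
matrix `S * H * S`, so `exp (s • (G * H))` is conjugate to `exp (s • (S * H * S))`. The spectral
theorem writes the latter as `U * diagonal (exp (s * λᵢ)) * Uᴴ` with all `λᵢ > 0`, which tends to
`0` as `s → -∞`; the trace expression is continuous in the exponential.
-/

open Matrix Filter Topology
open scoped ComplexOrder

namespace Matrix

variable {ι 𝕜 : Type*} [Fintype ι] [DecidableEq ι] [RCLike 𝕜]

lemma IsHermitian.exp_smul_eq_cfc {A : Matrix ι ι 𝕜} (hA : A.IsHermitian) (s : ℝ) :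
    NormedSpace.exp (s • A) = hA.cfc fun x => Real.exp (s * x) := by
  set U := (hA.eigenvectorUnitary : Matrix ι ι 𝕜)
  have hU : IsUnit U := (Unitary.toUnits hA.eigenvectorUnitary).isUnit
  have hUinv : U⁻¹ = star U := inv_eq_left_inv (Unitary.coe_star_mul_self _)
  have hsA : s • A = U * diagonal (fun i => ((s * hA.eigenvalues i : ℝ) : 𝕜)) * U⁻¹ := by
    conv_lhs => rw [hA.spectral_theorem]
    rw [hUinv, Unitary.conjStarAlgAut_apply, ← Matrix.smul_mul, ← Matrix.mul_smul,
      ← diagonal_smul]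
    congr 3
    funext i
    simp [RCLike.real_smul_eq_coe_mul]
  rw [hsA, exp_conj _ _ hU, exp_diagonal, IsHermitian.cfc, Unitary.conjStarAlgAut_apply, hUinv]
  congr 3
  funext i
  simp only [Pi.exp_def, Function.comp_apply, Real.exp_eq_exp_ℝ, ← RCLike.algebraMap_eq_ofReal,
    NormedSpace.algebraMap_exp_comm]

lemma PosDef.tendsto_exp_smul_atBot {A : Matrix ι ι 𝕜} (hA : A.PosDef) :
    Tendsto (fun s : ℝ => NormedSpace.exp (s • A)) atBot (𝓝 0) := by
  simp_rw [hA.isHermitian.exp_smul_eq_cfc, IsHermitian.cfc, Unitary.conjStarAlgAut_apply]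
  have hcont : Continuous fun v : ι → ℝ =>
      (hA.isHermitian.eigenvectorUnitary : Matrix ι ι 𝕜) * diagonal (RCLike.ofReal ∘ v) *
        star (hA.isHermitian.eigenvectorUnitary : Matrix ι ι 𝕜) := by
    fun_prop
  have hdecay : Tendsto (fun s : ℝ => fun i => Real.exp (s * hA.isHermitian.eigenvalues i))
      atBot (𝓝 0) :=
    tendsto_pi_nhds.2 fun i => Real.tendsto_exp_atBot.comp
      (tendsto_id.atBot_mul_const (hA.eigenvalues_pos i))
  simpa [Function.comp_def] using (hcont.tendsto 0).comp hdecay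

open scoped MatrixOrder in
lemma PosDef.sqrt_mul_mul_sqrt {G H : Matrix ι ι 𝕜} (hG : G.PosDef) (hH : H.PosDef) :
    (CFC.sqrt G * H * CFC.sqrt G).PosDef := by
  have hS : (CFC.sqrt G).PosDef := (hG.isStrictlyPositive.sqrt).posDef
  simpa [hS.isHermitian.eq] using
    hH.conjTranspose_mul_mul_same (mulVec_injective_iff_isUnit.2 hS.isUnit)

open scoped MatrixOrder in
lemma PosDef.tendsto_exp_smul_mul_atBot {G H : Matrix ι ι 𝕜} (hG : G.PosDef) (hH : H.PosDef) :
    Tendsto (fun s : ℝ => NormedSpace.exp (s • (G * H))) atBot (𝓝 0) := by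
  set S := CFC.sqrt G
  have hS : S.PosDef := (hG.isStrictlyPositive.sqrt).posDef
  have hconj : G * H = S * (S * H * S) * S⁻¹ := by
    have hSS : S * S = G := CFC.sqrt_mul_sqrt_self G hG.posSemidef.nonneg
    rw [← hSS]
    simp only [Matrix.mul_assoc, mul_nonsing_inv _ ((isUnit_iff_isUnit_det S).1 hS.isUnit),
      Matrix.mul_one]
  have hexp (s : ℝ) :
      NormedSpace.exp (s • (G * H)) = S * NormedSpace.exp (s • (S * H * S)) * S⁻¹ := by
    rw [hconj, ← exp_conj _ _ hS.isUnit, Matrix.mul_smul, Matrix.smul_mul]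
  have hcont : Continuous fun M : Matrix ι ι 𝕜 => S * M * S⁻¹ := by fun_prop
  simpa [hexp, Function.comp_def] using
    (hcont.tendsto 0).comp (hG.sqrt_mul_mul_sqrt hH).tendsto_exp_smul_atBot

end Matrix

theorem expected_loss_PD_hessian_general (n : ℕ)
    (G H Sg : Matrix (Fin n) (Fin n) ℝ) (hG : G.PosDef) (hH : H.PosDef) :
    Tendsto
      (fun t : ℝ =>
        (1 / 4) * Matrix.trace (Sg * G * (1 - NormedSpace.exp ((-(2 * t)) • (G * H)))))
      atTop (nhds ((1 / 4) * Matrix.trace (Sg * G))) := by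
  have hE := (hG.tendsto_exp_smul_mul_atBot hH).comp
    (tendsto_neg_atTop_atBot.comp (tendsto_id.const_mul_atTop two_pos))
  have hcont : Continuous fun A : Matrix (Fin n) (Fin n) ℝ =>
      (1 / 4 : ℝ) * trace (Sg * G * (1 - A)) := by fun_prop
  simpa [Function.comp_def] using (hcont.tendsto 0).comp hE

/-- Corollary (Expected loss for PD Hessian): for symmetric positive definite `G` and `H`,
`(1/4)·Tr(Σ·G·(I − exp(−2t·(G·H)))) → (1/4)·Tr(Σ·G)` as `t → ∞`. -/
theorem expected_loss_PD_hessian (n : ℕ) (hn : 1 ≤ n)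
    (G H Sg : Matrix (Fin n) (Fin n) ℝ) (hG : G.PosDef) (hH : H.PosDef) :
    Tendsto
      (fun t : ℝ =>
        (1 / 4) * Matrix.trace (Sg * G * (1 - NormedSpace.exp ((-(2 * t)) • (G * H)))))
      atTop (nhds ((1 / 4) * Matrix.trace (Sg * G))) :=
  expected_loss_PD_hessian_general n G H Sg hG hH
end

section
/- Let G be a symmetric positive definite n×n real matrix, H a symmetric positive semidefinite n×n real matrix, σ > 0 a real number, and set Σ = σ²·G⁻¹ (so that Σ·G = σ²·I). Then as t → ∞, the function t ↦ (4/σ²)·(1/4)·Tr(Σ·G·(I − exp(−2t·(G·H)))) converges to rank(H), the rank of H viewed as a real number. (Corollary 3: expected loss and Hessian rank.) -/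
/-!
Take `S = √G`. Then `G * H = S * (S * H * S) * S⁻¹`, so `exp (-t • (G * H))` is similar to
`exp (-t • (S * H * S))`, and `S * H * S` is positive semidefinite of the same rank as `H`.
Diagonalising it, the trace of its exponential is `∑ᵢ exp (-t μᵢ)` over eigenvalues
`μᵢ ≥ 0`, which tends to the number of zero eigenvalues, `n - rank H`.
Since `Σ * G = σ² • 1`, the expression in the theorem is `n - Tr (exp (-2t • (G * H)))`.
-/

open Matrix Filter

open Topology

theorem Real.tendsto_exp_neg_mul_of_nonneg {μ : ℝ} (hμ : 0 ≤ μ) :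
    Tendsto (fun t => Real.exp (-t * μ)) atTop (𝓝 (if μ = 0 then 1 else 0)) := by
  split_ifs with h
  · simp [h]
  · have hμ' : 0 < μ := hμ.lt_of_ne' h
    refine Real.tendsto_exp_atBot.comp ?_
    simpa [neg_mul] using tendsto_id.atTop_mul_const hμ'

namespace Matrix

variable {n : Type*} [Fintype n] [DecidableEq n]

theorem IsHermitian.trace_exp_smul {A : Matrix n n ℝ} (hA : A.IsHermitian) (t : ℝ) :
    trace (NormedSpace.exp (t • A)) = ∑ i, Real.exp (t * hA.eigenvalues i) := by
  set U := Unitary.toUnits hA.eigenvectorUnitary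
  have hA' : t • A =
      (U : Matrix n n ℝ) * diagonal (t • hA.eigenvalues) * (↑(U⁻¹) : Matrix n n ℝ) := by
    conv_lhs => rw [hA.spectral_theorem]
    rw [← map_smul, ← diagonal_smul]
    simp [U, RCLike.ofReal_real_eq_id]
  rw [hA', exp_units_conj, trace_units_conj, exp_diagonal, trace_diagonal]
  simp [Real.exp_eq_exp_ℝ]

theorem PosSemidef.tendsto_trace_exp_neg_smul {A : Matrix n n ℝ} (hA : A.PosSemidef) :
    Tendsto (fun t : ℝ => trace (NormedSpace.exp (-t • A))) atTop
      (𝓝 (Fintype.card n - A.rank)) := by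
  have hcount :
      (Fintype.card n : ℝ) - A.rank = ∑ i, if hA.1.eigenvalues i = 0 then 1 else 0 := by
    rw [hA.1.rank_eq_card_non_zero_eigs, Finset.sum_boole, ← Finset.card_univ,
      ← Finset.card_filter_add_card_filter_not (fun i => hA.1.eigenvalues i = 0)]
    simp [Fintype.card_subtype]
  simp only [hA.1.trace_exp_smul, hcount]
  exact tendsto_finsetSum _ fun i _ =>
    Real.tendsto_exp_neg_mul_of_nonneg (hA.eigenvalues_nonneg i)

open scoped MatrixOrder in
theorem PosDef.tendsto_trace_exp_neg_smul_mul {G H : Matrix n n ℝ} (hG : G.PosDef)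
    (hH : H.PosSemidef) :
    Tendsto (fun t : ℝ => trace (NormedSpace.exp (-t • (G * H)))) atTop
      (𝓝 (Fintype.card n - H.rank)) := by
  set S := CFC.sqrt G
  have hS : S * S = G := CFC.sqrt_mul_sqrt_self G hG.posSemidef.nonneg
  have hS_herm : Sᴴ = S := (CFC.sqrt_nonneg G).posSemidef.1
  have hS_unit : IsUnit S := isUnit_of_mul_isUnit_left (hS ▸ hG.isUnit)
  have hS_det : IsUnit S.det := (isUnit_iff_isUnit_det S).mp hS_unit
  have hM : (S * H * S).PosSemidef := by
    simpa only [hS_herm] using hH.conjTranspose_mul_mul_same S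
  have hM_rank : (S * H * S).rank = H.rank := by
    rw [rank_mul_eq_left_of_isUnit_det _ _ hS_det, rank_mul_eq_right_of_isUnit_det _ _ hS_det]
  have hGH : ∀ t : ℝ, -t • (G * H) = S * (-t • (S * H * S)) * S⁻¹ := by
    intro t
    rw [Matrix.mul_smul, Matrix.smul_mul, ← hS]
    simp only [mul_assoc, mul_nonsing_inv _ hS_det, mul_one]
  simpa only [hGH, exp_conj _ _ hS_unit, trace_conj hS_unit, hM_rank]
    using hM.tendsto_trace_exp_neg_smul

end Matrix

theorem expected_loss_hessian_rank_general (n : ℕ)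
    (G H Sg : Matrix (Fin n) (Fin n) ℝ) (hG : G.PosDef) (hH : H.PosSemidef)
    (σ : ℝ) (hσ : 0 < σ) (hSg : Sg = σ ^ 2 • G⁻¹) :
    Tendsto
      (fun t : ℝ =>
        (4 / σ ^ 2) *
          ((1 / 4) * Matrix.trace (Sg * G * (1 - NormedSpace.exp ((-(2 * t)) • (G * H))))))
      atTop (nhds (H.rank : ℝ)) := by
  have hSgG : Sg * G = σ ^ 2 • 1 := by
    rw [hSg, Matrix.smul_mul, nonsing_inv_mul _ hG.det_pos.ne'.isUnit]
  have hσ2 : σ ^ 2 ≠ 0 := by positivity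
  have hrewrite : ∀ t : ℝ, (4 / σ ^ 2) *
      ((1 / 4) * Matrix.trace (Sg * G * (1 - NormedSpace.exp ((-(2 * t)) • (G * H))))) =
      n - Matrix.trace (NormedSpace.exp (-(2 * t) • (G * H))) := by
    intro t
    rw [hSgG, smul_one_mul, trace_smul, trace_sub, trace_one, Fintype.card_fin, smul_eq_mul]
    field_simp
  have hGH_lim := (hG.tendsto_trace_exp_neg_smul_mul hH).comp
    (tendsto_id.const_mul_atTop (zero_lt_two : (0 : ℝ) < 2))
  have hlim := (tendsto_const_nhds (x := (n : ℝ))).sub hGH_lim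
  rw [Fintype.card_fin, sub_sub_cancel] at hlim
  exact hlim.congr fun t => (hrewrite t).symm

/-- Corollary 3 (Expected loss and Hessian rank): for symmetric positive definite `G`,
symmetric positive semidefinite `H`, `σ > 0` and `Σ = σ²·G⁻¹` (so `Σ·G = σ²·I`),
`(4/σ²)·(1/4)·Tr(Σ·G·(I − exp(−2t·(G·H)))) → rank(H)` as `t → ∞`. -/
theorem expected_loss_hessian_rank (n : ℕ) (hn : 1 ≤ n)
    (G H Sg : Matrix (Fin n) (Fin n) ℝ) (hG : G.PosDef) (hH : H.PosSemidef)
    (σ : ℝ) (hσ : 0 < σ) (hSg : Sg = σ ^ 2 • G⁻¹) :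
    Tendsto
      (fun t : ℝ =>
        (4 / σ ^ 2) *
          ((1 / 4) * Matrix.trace (Sg * G * (1 - NormedSpace.exp ((-(2 * t)) • (G * H))))))
      atTop (nhds (H.rank : ℝ)) :=
  expected_loss_hessian_rank_general n G H Sg hG hH σ hσ hSg
end

section
/- Let Σ be a symmetric positive definite n×n real matrix (n ≥ 1), and let R be a symmetric positive semidefinite n×n real matrix with R·R = Σ⁻¹ (i.e., R = Σ^{−1/2}). If Tr(Σ) > n, then sqrt(Tr(Σ⁻¹)/n)·Tr(Σ) > Tr(R). (Proposition 5: with preconditioners of equal Frobenius norm, the SGD-like preconditioner G₁ = sqrt(Tr(Σ⁻¹)/n)·I yields a strictly larger asymptotic expected loss Tr(G₁·Σ) than the Adam-like preconditioner G₂ = Σ^{−1/2}, whose asymptotic expected loss is Tr(Σ^{−1/2}).) -/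
/-! For symmetric `R`, Cauchy–Schwarz on the diagonal and `Rᵢᵢ² ≤ ∑ⱼ Rᵢⱼ² = (R R)ᵢᵢ` give
`(Tr R)² ≤ n Tr(R²) = n Tr(Σ⁻¹)`, i.e. `Tr R ≤ n √(Tr(Σ⁻¹)/n)`; the hypothesis `n < Tr Σ` and
`Tr(Σ⁻¹) > 0` make the last bound strictly smaller than `√(Tr(Σ⁻¹)/n) Tr Σ`. -/

open Matrix

lemma Real.le_mul_sqrt_div_of_sq_le_mul {x a b : ℝ} (ha : 0 < a) (h : x ^ 2 ≤ a * b) :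
    x ≤ a * √(b / a) := by
  have hsqrt : a * √(b / a) = √(a * b) := by
    rw [show a * b = a ^ 2 * (b / a) by field_simp, Real.sqrt_mul (sq_nonneg a),
      Real.sqrt_sq ha.le]
  rw [hsqrt]
  exact (le_abs_self x).trans (Real.abs_le_sqrt h)

lemma Matrix.IsHermitian.trace_sq_le_card_mul_trace_mul_self {ι : Type*} [Fintype ι]
    {R : Matrix ι ι ℝ} (hR : R.IsHermitian) :
    R.trace ^ 2 ≤ Fintype.card ι * (R * R).trace := by
  have hdiag : ∀ i, R i i ^ 2 ≤ (R * R) i i := fun i => by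
    have hsymm : ∀ j, R j i = R i j := fun j => by simpa using congrFun (congrFun hR i) j
    simp only [mul_apply, hsymm]
    simpa [sq] using Finset.single_le_sum (f := fun j => R i j * R i j)
      (fun j _ => mul_self_nonneg _) (Finset.mem_univ i)
  calc R.trace ^ 2 ≤ Fintype.card ι * ∑ i, R i i ^ 2 := sq_sum_le_card_mul_sum_sq
    _ ≤ Fintype.card ι * (R * R).trace := by
      gcongr
      exact Finset.sum_le_sum fun i _ => hdiag i

theorem sgd_beats_adam_general (n : ℕ)
    (Sg R : Matrix (Fin n) (Fin n) ℝ) (hSg : Sg.PosDef) (hR : R.PosSemidef)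
    (hRR : R * R = Sg⁻¹) (hTr : (n : ℝ) < Matrix.trace Sg) :
    Matrix.trace R < Real.sqrt (Matrix.trace Sg⁻¹ / n) * Matrix.trace Sg := by
  have : NeZero n := ⟨by rintro rfl; simp at hTr⟩
  have hn : (0 : ℝ) < n := by exact_mod_cast NeZero.pos n
  have hsqrt : 0 < √(Sg⁻¹.trace / n) := Real.sqrt_pos.mpr (div_pos hSg.inv.trace_pos hn)
  have hCS : R.trace ^ 2 ≤ n * Sg⁻¹.trace := by
    simpa [hRR] using hR.isHermitian.trace_sq_le_card_mul_trace_mul_self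
  calc R.trace ≤ n * √(Sg⁻¹.trace / n) := Real.le_mul_sqrt_div_of_sq_le_mul hn hCS
    _ < Sg.trace * √(Sg⁻¹.trace / n) := by gcongr
    _ = √(Sg⁻¹.trace / n) * Sg.trace := mul_comm _ _

/-- Proposition 5: if `Tr(Σ) > n` then the SGD-like preconditioner yields a strictly larger
asymptotic expected loss than the Adam-like preconditioner `Σ^{−1/2}`:
`sqrt(Tr(Σ⁻¹)/n)·Tr(Σ) > Tr(Σ^{−1/2})`. -/
theorem sgd_beats_adam (n : ℕ) (hn : 1 ≤ n)
    (Sg R : Matrix (Fin n) (Fin n) ℝ) (hSg : Sg.PosDef) (hR : R.PosSemidef)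
    (hRR : R * R = Sg⁻¹) (hTr : (n : ℝ) < Matrix.trace Sg) :
    Matrix.trace R < Real.sqrt (Matrix.trace Sg⁻¹ / n) * Matrix.trace Sg :=
  sgd_beats_adam_general n Sg R hSg hR hRR hTr
end

section
/- Let G be a symmetric positive definite n×n real matrix and H a symmetric n×n real matrix such that there exists a real vector u with uᵀ·H·u < 0. Then G·H has a negative real eigenvalue: there exist a real number λ < 0 and a nonzero real vector v with (G·H)·v = λ·v. (Lemma A.4.) -/
/-!
Factor `G = Sᴴ S` with `S` invertible. Then `G H Sᴴ = Sᴴ (S H Sᴴ)`, so every eigenvector `x` of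
the symmetric matrix `S H Sᴴ` yields the eigenvector `Sᴴ x` of `G H` with the same eigenvalue.
Since `H` is not positive semidefinite, neither is its congruent `S H Sᴴ`, which therefore has a
negative eigenvalue.
-/

open Matrix

open scoped ComplexOrder

namespace Matrix

variable {n 𝕜 : Type*} [Fintype n] [DecidableEq n] [RCLike 𝕜]

open scoped MatrixOrder in
theorem PosDef.exists_isUnit_eq_star_mul_self {G : Matrix n n 𝕜} (hG : G.PosDef) :
    ∃ S : Matrix n n 𝕜, IsUnit S ∧ G = star S * S :=
  CStarAlgebra.isStrictlyPositive_iff_eq_star_mul_self.mp hG.isStrictlyPositive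

theorem IsHermitian.exists_neg_eigenpair_of_not_posSemidef {M : Matrix n n 𝕜}
    (hM : M.IsHermitian) (hM' : ¬M.PosSemidef) :
    ∃ (lam : ℝ) (x : n → 𝕜), lam < 0 ∧ x ≠ 0 ∧ M *ᵥ x = lam • x := by
  obtain ⟨i, hi⟩ : ∃ i, hM.eigenvalues i < 0 := by
    simpa [hM.posSemidef_iff_eigenvalues_nonneg, Pi.le_def] using hM'
  refine ⟨_, _, hi, ?_, hM.mulVec_eigenvectorBasis i⟩
  exact (WithLp.ofLp_eq_zero 2).not.mpr (hM.eigenvectorBasis.orthonormal.ne_zero i)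

end Matrix

theorem GH_has_negative_eigenvalue_general (n : ℕ)
    (G H : Matrix (Fin n) (Fin n) ℝ) (hG : G.PosDef) (hH : H.IsHermitian)
    (u : Fin n → ℝ) (hu : u ⬝ᵥ (H *ᵥ u) < 0) :
    ∃ (lam : ℝ) (v : Fin n → ℝ), lam < 0 ∧ v ≠ 0 ∧ (G * H) *ᵥ v = lam • v := by
  obtain ⟨S, hS, rfl⟩ := hG.exists_isUnit_eq_star_mul_self
  have hH' : ¬H.PosSemidef := fun h => hu.not_ge (by simpa using h.dotProduct_mulVec_nonneg u)
  have hM : ¬(S * H * star S).PosSemidef := hS.posSemidef_star_right_conjugate_iff.not.mpr hH'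
  obtain ⟨lam, x, hlam, hx0, hx⟩ :=
    (isHermitian_mul_mul_conjTranspose S hH).exists_neg_eigenpair_of_not_posSemidef hM
  refine ⟨lam, star S *ᵥ x, hlam, ?_, ?_⟩
  · exact (mulVec_injective_iff_isUnit.mpr hS.star).ne_iff' (mulVec_zero _) |>.mpr hx0
  · calc (star S * S * H) *ᵥ (star S *ᵥ x) = star S *ᵥ ((S * H * Sᴴ) *ᵥ x) := by
          simp only [mulVec_mulVec, mul_assoc, star_eq_conjTranspose]
      _ = lam • (star S *ᵥ x) := by rw [hx, mulVec_smul]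

/-- Lemma A.4: if `G` is symmetric positive definite and `H` is symmetric with `uᵀ·H·u < 0`
for some vector `u`, then `G·H` has a negative real eigenvalue. -/
theorem GH_has_negative_eigenvalue (n : ℕ) (hn : 1 ≤ n)
    (G H : Matrix (Fin n) (Fin n) ℝ) (hG : G.PosDef) (hH : H.IsHermitian)
    (u : Fin n → ℝ) (hu : u ⬝ᵥ (H *ᵥ u) < 0) :
    ∃ (lam : ℝ) (v : Fin n → ℝ), lam < 0 ∧ v ≠ 0 ∧ (G * H) *ᵥ v = lam • v :=
  GH_has_negative_eigenvalue_general n G H hG hH u hu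
end

section
/- Let G be a symmetric positive definite n×n real matrix, let Σ = (G·G)⁻¹ (i.e., the preconditioner is G = Σ^{−1/2}), and let H be any n×n real matrix. Then the function F(t) = (1/4)·Tr(Σ·G·(I − exp(−2t·(G·H)))) has derivative (1/2)·Tr(H) at t = 0. (Equation (14): for the preconditioner G = Σ^{−1/2}, the initial slope of the expected loss is proportional to the Hessian trace.) -/
/-! The map `t ↦ Tr(Σ G (I - exp(-2t GH)))` differentiates at `0` to `2 Tr(Σ G G H)`, since
`exp(s X)` has derivative `X` at `s = 0` and `X ↦ Tr(M X)` is linear. For `Σ = (G G)⁻¹` the factor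
`Σ G G` cancels because a positive definite `G` is invertible, leaving `2 Tr H`. -/

open Matrix

attribute [local instance] Matrix.linftyOpNormedAddCommGroup Matrix.linftyOpNormedRing
  Matrix.linftyOpNormedSpace Matrix.linftyOpNormedAlgebra

theorem hasDerivAt_one_sub_exp_neg_mul_smul_zero {𝕂 𝔸 : Type*} [RCLike 𝕂] [NormedRing 𝔸]
    [NormedAlgebra 𝕂 𝔸] [CompleteSpace 𝔸] (c : 𝕂) (x : 𝔸) :
    HasDerivAt (fun t : 𝕂 => 1 - NormedSpace.exp ((-(c * t)) • x)) (c • x) 0 := by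
  have hexp : HasDerivAt (fun s : 𝕂 => NormedSpace.exp (s • x)) x (-(c * 0)) := by
    simpa using hasDerivAt_exp_smul_const (𝕂 := 𝕂) x 0
  have hlin : HasDerivAt (fun t : 𝕂 => -(c * t)) (-c) 0 := by
    simpa using ((hasDerivAt_id (0 : 𝕂)).const_mul c).fun_neg
  simpa [neg_smul] using (hexp.scomp 0 hlin).const_sub 1

theorem HasDerivAt.matrix_trace_mul_left {𝕜 ι : Type*} [NontriviallyNormedField 𝕜]
    [CompleteSpace 𝕜] [Fintype ι] [DecidableEq ι] (M : Matrix ι ι 𝕜) {f : 𝕜 → Matrix ι ι 𝕜} {f' : Matrix ι ι 𝕜} {t : 𝕜}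
    (hf : HasDerivAt f f' t) : HasDerivAt (fun s => (M * f s).trace) (M * f').trace t :=
  ((traceLinearMap ι 𝕜 𝕜).toContinuousLinearMap.hasFDerivAt.comp_hasDerivAt t
    (hf.const_mul M) :)

theorem hasDerivAt_expected_loss_trace_general (n : ℕ)
    (G Sg H : Matrix (Fin n) (Fin n) ℝ) (hG : G.PosDef) (hSg : Sg = (G * G)⁻¹) :
    HasDerivAt
      (fun t : ℝ =>
        (1 / 4) * Matrix.trace (Sg * G * (1 - NormedSpace.exp ((-(2 * t)) • (G * H)))))
      ((1 / 2) * Matrix.trace H) 0 := by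
  have hcancel : Sg * G * (G * H) = H := by
    have hdet : IsUnit (G * G).det := hG.isUnit.mul hG.isUnit |>.map detMonoidHom
    rw [hSg, Matrix.mul_assoc, ← Matrix.mul_assoc G, nonsing_inv_mul_cancel_left _ H hdet]
  have hderiv := ((hasDerivAt_one_sub_exp_neg_mul_smul_zero (2 : ℝ) (G * H)).matrix_trace_mul_left
    (Sg * G)).const_mul (1 / 4 : ℝ)
  rw [Matrix.mul_smul, hcancel, trace_smul, smul_eq_mul] at hderiv
  rwa [show (1 / 4 : ℝ) * (2 * H.trace) = 1 / 2 * H.trace by ring] at hderiv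

/-- Equation (14): for the preconditioner `G = Σ^{−1/2}` (i.e. `Σ = (G·G)⁻¹`), the initial
slope of the expected loss `F(t) = (1/4)·Tr(Σ·G·(I − exp(−2t·(G·H))))` at `t = 0` is
`(1/2)·Tr(H)`. -/
theorem hasDerivAt_expected_loss_trace (n : ℕ) (hn : 1 ≤ n)
    (G Sg H : Matrix (Fin n) (Fin n) ℝ) (hG : G.PosDef) (hSg : Sg = (G * G)⁻¹) :
    HasDerivAt
      (fun t : ℝ =>
        (1 / 4) * Matrix.trace (Sg * G * (1 - NormedSpace.exp ((-(2 * t)) • (G * H)))))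
      ((1 / 2) * Matrix.trace H) 0 :=
  hasDerivAt_expected_loss_trace_general n G Sg H hG hSg
end
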